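/- Let G be a finite non-cyclic 2-group. If the reduced power graph P*(G) is claw-free, then either the exponent of G is at most 4 or G is a dihedral group. -/

import Mathlib

/-- Adjacency in the power graph: the two elements are distinct and one of the
two cyclic subgroups they generate is contained in the other. -/
def PowAdj {G : Type*} [Group G] (a b : G) : Prop :=
  a ≠ b ∧ (a ∈ Subgroup.zpowers b ∨ b ∈ Subgroup.zpowers a)

/-- The reduced power graph `P*(G)`: the induced subgraph of the power graph
on the non-identity elements of `G`. -/
def reducedPowerGraph (G : Type*) [Group G] : SimpleGraph {g : G // g ≠ 1} where
  Adj a b := PowAdj (a : G) (b : G)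
  symm := by
    constructor
    intro a b h
    exact ⟨h.1.symm, h.2.symm⟩
  loopless := by
    constructor
    intro a h
    exact h.1 rfl

/-- A graph is claw-free if it has no vertex with three pairwise distinct,
pairwise non-adjacent neighbours. -/
def IsClawFree {V : Type*} (Γ : SimpleGraph V) : Prop :=
  ¬ ∃ b a₁ a₂ a₃ : V, a₁ ≠ a₂ ∧ a₁ ≠ a₃ ∧ a₂ ≠ a₃ ∧
      Γ.Adj b a₁ ∧ Γ.Adj b a₂ ∧ Γ.Adj b a₃ ∧
      ¬ Γ.Adj a₁ a₂ ∧ ¬ Γ.Adj a₁ a₃ ∧ ¬ Γ.Adj a₂ a₃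

set_option linter.unusedSectionVars false
set_option linter.unusedVariables false
set_option maxHeartbeats 1000000

open Subgroup

section Helpers
variable {G : Type*} [Group G] [Finite G]

lemma find_claw (hcf : IsClawFree (reducedPowerGraph G))
    {b a₁ a₂ a₃ : G} (hb : b ≠ 1) (h1 : a₁ ≠ 1) (h2 : a₂ ≠ 1) (h3 : a₃ ≠ 1)
    (h12 : a₁ ≠ a₂) (h13 : a₁ ≠ a₃) (h23 : a₂ ≠ a₃)
    (hb1 : PowAdj b a₁) (hb2 : PowAdj b a₂) (hb3 : PowAdj b a₃)
    (hn12 : ¬ PowAdj a₁ a₂) (hn13 : ¬ PowAdj a₁ a₃) (hn23 : ¬ PowAdj a₂ a₃) : False :=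
  hcf ⟨⟨b, hb⟩, ⟨a₁, h1⟩, ⟨a₂, h2⟩, ⟨a₃, h3⟩,
    fun h => h12 (congrArg Subtype.val h),
    fun h => h13 (congrArg Subtype.val h),
    fun h => h23 (congrArg Subtype.val h),
    hb1, hb2, hb3, hn12, hn13, hn23⟩

lemma mem_zpow_nat {a g : G} (h : g ∈ zpowers a) : ∃ m : ℕ, g = a ^ m := by
  obtain ⟨z, hz⟩ := mem_zpowers_iff.mp h
  refine ⟨(z % (orderOf a : ℤ)).toNat, ?_⟩
  have h0 : (0:ℤ) ≤ z % (orderOf a : ℤ) :=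
    Int.emod_nonneg _ (by exact_mod_cast (orderOf_pos a).ne')
  rw [← hz, ← zpow_mod_orderOf a z, ← zpow_natCast, Int.toNat_of_nonneg h0]

lemma mem_zpowers_self_pow {g : G} {m : ℕ} (hco : Nat.Coprime m (orderOf g)) :
    g ∈ zpowers (g ^ m) := by
  have h := Nat.gcd_eq_gcd_ab m (orderOf g)
  rw [hco] at h
  have h1 : g = (g ^ m) ^ (Nat.gcdA m (orderOf g)) := by
    calc g = g ^ ((1:ℕ) : ℤ) := by rw [zpow_natCast, pow_one]
    _ = g ^ ((m : ℤ) * Nat.gcdA m (orderOf g) + (orderOf g : ℤ) * Nat.gcdB m (orderOf g)) := by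
        rw [← h]
    _ = (g ^ m) ^ (Nat.gcdA m (orderOf g)) := by
        rw [zpow_add, zpow_mul, zpow_mul, zpow_natCast, zpow_natCast,
          pow_orderOf_eq_one, one_zpow, mul_one]
  exact mem_zpowers_iff.mpr ⟨_, h1.symm⟩

lemma mem_zpowers_of_mem_of_le {a b : G}
    (h : a ∈ zpowers b) (hle : orderOf b ≤ orderOf a) : b ∈ zpowers a := by
  obtain ⟨m, rfl⟩ := mem_zpow_nat h
  have hord : orderOf (b ^ m) = orderOf b / Nat.gcd (orderOf b) m := orderOf_pow b
  have hpos : 0 < orderOf b := orderOf_pos b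
  have hdl : Nat.gcd (orderOf b) m ∣ orderOf b := Nat.gcd_dvd_left _ _
  have hg : Nat.gcd (orderOf b) m = 1 := by
    have hgpos : 0 < Nat.gcd (orderOf b) m := Nat.gcd_pos_of_pos_left m hpos
    have hqd : orderOf b / Nat.gcd (orderOf b) m * Nat.gcd (orderOf b) m = orderOf b :=
      Nat.div_mul_cancel hdl
    rw [hord] at hle
    nlinarith [hgpos, hle, hqd, hpos]
  exact mem_zpowers_self_pow (Nat.Coprime.symm hg)

lemma mul_not_mem {x a u : G} (ha : a ∈ zpowers x) (hu : u ∉ zpowers x) :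
    a * u ∉ zpowers x := fun h => hu (by
  have : a⁻¹ * (a * u) ∈ zpowers x := mul_mem (inv_mem ha) h
  simpa using this)

lemma sq_pow_even {t : G} (ht : t^2 = 1) {c : ℕ} (hc : Even c) : t^c = 1 := by
  obtain ⟨a, rfl⟩ := hc
  rw [show a + a = 2*a by omega, pow_mul, ht, one_pow]

lemma sq_pow_odd {t : G} (ht : t^2 = 1) {c : ℕ} (hc : Odd c) : t^c = t := by
  obtain ⟨a, rfl⟩ := hc
  rw [pow_add, pow_mul, ht, one_pow, pow_one, one_mul]

lemma mem_ord4 {g t h : G} (hg : g^2 = t) (ht : t^2 = 1) (hm : h ∈ zpowers g) :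
    h = 1 ∨ h = g ∨ h = t ∨ h = t * g := by
  obtain ⟨m, rfl⟩ := mem_zpow_nat hm
  have h4 : g ^ 4 = 1 := by
    rw [show (4:ℕ) = 2*2 from rfl, pow_mul, hg, ht]
  have hmod : g ^ m = g ^ (m % 4) := by
    conv_lhs => rw [← Nat.div_add_mod m 4]
    rw [pow_add, pow_mul, h4, one_pow, one_mul]
  have hlt : m % 4 < 4 := Nat.mod_lt _ (by norm_num)
  interval_cases h : m % 4
  · left; rw [hmod, pow_zero]
  · right; left; rw [hmod, pow_one]
  · right; right; left; rw [hmod, hg]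
  · right; right; right
    rw [hmod, show (3:ℕ) = 2 + 1 from rfl, pow_add, hg, pow_one]

lemma mem_sq_decomp {b h : G} (hm : h ∈ zpowers b) :
    ∃ c : ℕ, h = (b^2)^c ∨ h = (b^2)^c * b := by
  obtain ⟨m, rfl⟩ := mem_zpow_nat hm
  refine ⟨m/2, ?_⟩
  rcases Nat.even_or_odd m with ⟨a, rfl⟩ | ⟨a, rfl⟩
  · left; rw [← pow_mul]; congr 1; omega
  · right; rw [← pow_mul, ← pow_succ]; congr 1; omega

lemma ord2 (hG : IsPGroup 2 G) (g : G) : ∃ j, orderOf g = 2 ^ j := by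
  obtain ⟨n, hn⟩ := hG g
  obtain ⟨j, _, hoj⟩ := (Nat.dvd_prime_pow Nat.prime_two).mp
    (orderOf_dvd_iff_pow_eq_one.mpr hn)
  exact ⟨j, hoj⟩

end Helpers

section Main
variable {G : Type*} [Group G] [Finite G] {x y : G} {k : ℕ}

lemma x4ne (hk : 3 ≤ k) (hx : orderOf x = 2^k) : x ^ 4 ≠ 1 := by
  intro h
  have hdvd : 2^k ∣ 4 := hx ▸ orderOf_dvd_iff_pow_eq_one.mpr h
  have := Nat.le_of_dvd (by norm_num) hdvd
  have h8 : (8:ℕ) ≤ 2^k := by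
    calc (8:ℕ) = 2^3 := by norm_num
    _ ≤ 2^k := Nat.pow_le_pow_right (by norm_num) hk
  omega

lemma xpow2k (hx : orderOf x = 2^k) : x ^ (2^k) = 1 := by
  rw [← hx]; exact pow_orderOf_eq_one x

lemma ht2 (hk : 1 ≤ k) (hx : orderOf x = 2^k) : (x ^ (2^(k-1)))^2 = 1 := by
  rw [← pow_mul, show 2^(k-1)*2 = 2^k by rw [← pow_succ]; congr 1; omega]
  exact xpow2k hx

lemma htne (hk : 1 ≤ k) (hx : orderOf x = 2^k) : x ^ (2^(k-1)) ≠ 1 := by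
  intro h
  have hdvd : 2^k ∣ 2^(k-1) := hx ▸ orderOf_dvd_iff_pow_eq_one.mpr h
  have := Nat.le_of_dvd (by positivity) hdvd
  have h2k : (2:ℕ)^(k-1)*2 = 2^k := by rw [← pow_succ]; congr 1; omega
  have hpos : 0 < (2:ℕ)^(k-1) := by positivity
  omega

lemma invol_eq (hk : 1 ≤ k) (hx : orderOf x = 2^k) {h : G}
    (hmem : h ∈ zpowers x) (h2 : h ^ 2 = 1) (h1 : h ≠ 1) : h = x ^ (2^(k-1)) := by
  obtain ⟨m, rfl⟩ := mem_zpow_nat hmem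
  have hdvd : 2^k ∣ m * 2 := by
    rw [← hx]
    exact orderOf_dvd_iff_pow_eq_one.mpr (by rw [← pow_mul] at h2; exact h2)
  have h2k : (2:ℕ)^(k-1) * 2 = 2^k := by rw [← pow_succ]; congr 1; omega
  obtain ⟨c, hc⟩ : 2^(k-1) ∣ m := by
    rcases hdvd with ⟨d, hd⟩
    refine ⟨d, Nat.eq_of_mul_eq_mul_right (by norm_num : 0 < 2) ?_⟩
    rw [hd, ← h2k]; ring
  subst hc
  have hxk1 := xpow2k hx
  rcases Nat.even_or_odd c with ⟨d, rfl⟩ | ⟨d, rfl⟩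
  · exfalso; apply h1
    have e1 : 2^(k-1) * (d + d) = 2^k * d := by rw [← h2k]; ring
    rw [e1, pow_mul, hxk1, one_pow]
  · have e2 : 2^(k-1) * (2*d+1) = 2^k * d + 2^(k-1) := by rw [← h2k]; ring
    rw [e2, pow_add, pow_mul, hxk1, one_pow, one_mul]

lemma t_mem (hG : IsPGroup 2 G) (hk : 1 ≤ k) (hx : orderOf x = 2^k) {g : G}
    (hg : g ∈ zpowers x) (hg1 : g ≠ 1) : x ^ (2^(k-1)) ∈ zpowers g := by
  obtain ⟨j, hoj⟩ := ord2 hG g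
  have hj1 : 1 ≤ j := by
    rcases Nat.eq_zero_or_pos j with rfl | h
    · exact absurd (orderOf_eq_one_iff.mp (by simpa using hoj)) hg1
    · exact h
  have h2 : (g ^ (2^(j-1))) ^ 2 = 1 := by
    rw [← pow_mul, show 2^(j-1) * 2 = 2^j by rw [← pow_succ]; congr 1; omega, ← hoj]
    exact pow_orderOf_eq_one g
  have hne : g ^ (2^(j-1)) ≠ 1 := by
    intro hcon
    have hd : orderOf g ∣ 2^(j-1) := orderOf_dvd_iff_pow_eq_one.mpr hcon
    rw [hoj] at hd
    have hle := Nat.le_of_dvd (by positivity) hd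
    have h2j : (2:ℕ)^(j-1)*2 = 2^j := by rw [← pow_succ]; congr 1; omega
    have hpos : 0 < (2:ℕ)^(j-1) := by positivity
    omega
  have hmem : g ^ (2^(j-1)) ∈ zpowers x := (zpowers_le.mpr hg) (pow_mem (mem_zpowers g) _)
  have heq := invol_eq hk hx hmem h2 hne
  rw [← heq]
  exact pow_mem (mem_zpowers g) _

lemma xmem (hx : orderOf x = 2^k) (hmax : ∀ g : G, orderOf g ≤ 2^k) {g : G}
    (h : x ∈ zpowers g) : g ∈ zpowers x :=
  mem_zpowers_of_mem_of_le h (by rw [hx]; exact hmax g)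

lemma nonadj_x (hx : orderOf x = 2^k) (hmax : ∀ g : G, orderOf g ≤ 2^k) {g : G}
    (hg : g ∉ zpowers x) : ¬ PowAdj x g := by
  rintro ⟨hne, h | h⟩
  · exact hg (xmem hx hmax h)
  · exact hg h

lemma LE1 (hk : 3 ≤ k) (hx : orderOf x = 2^k) {m : ℕ} (hodd : Odd m)
    (h : x ^ (4 * m) = 1) : False := by
  have hdvd : 2^k ∣ 4*m := hx ▸ orderOf_dvd_iff_pow_eq_one.mpr h
  have h8 : (8:ℕ) ∣ 2^k := by
    calc (8:ℕ) = 2^3 := by norm_num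
    _ ∣ 2^k := pow_dvd_pow 2 hk
  obtain ⟨a, rfl⟩ := hodd
  obtain ⟨e, he⟩ := dvd_trans h8 hdvd
  omega

lemma caseII (hcf : IsClawFree (reducedPowerGraph G)) (hG : IsPGroup 2 G)
    (hk : 3 ≤ k) (hx : orderOf x = 2^k) (hmax : ∀ g : G, orderOf g ≤ 2^k)
    (hyX : y ∉ zpowers x) (hy2 : y^2 ∈ zpowers x)
    (hconj : y * x * y⁻¹ = x⁻¹) (hy2ne : y^2 ≠ 1) : False := by
  have hx4 : x^4 ≠ 1 := x4ne hk hx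
  have hx2 : x^2 ≠ 1 := fun h => hx4 (by rw [show (4:ℕ) = 2*2 from rfl, pow_mul, h, one_pow])
  have hx1 : x ≠ 1 := fun h => hx4 (by rw [h, one_pow])
  set t := x ^ (2^(k-1)) with hts
  have htx : t ∈ zpowers x := pow_mem (mem_zpowers x) _
  have ht1 : t ≠ 1 := htne (by omega) hx
  have ht2' : t^2 = 1 := ht2 (by omega) hx
  have hy1 : y ≠ 1 := fun h => hyX (h ▸ one_mem _)
  have hxyX : x*y ∉ zpowers x := mul_not_mem (mem_zpowers x) hyX
  have hxy1 : x*y ≠ 1 := fun h => hxyX (h ▸ one_mem _)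
  have hxy2 : (x*y)^2 = y^2 := by
    have h1 : (x*y)^2 = x * (y*x*y⁻¹) * y^2 := by
      rw [pow_two, pow_two]; group
    rw [h1, hconj]; group
  have hty : t ∈ zpowers y :=
    (zpowers_le.mpr (pow_mem (mem_zpowers y) 2)) (t_mem hG (by omega) hx hy2 hy2ne)
  have htxy : t ∈ zpowers (x*y) := by
    have h1 : t ∈ zpowers ((x*y)^2) := by
      rw [hxy2]; exact t_mem hG (by omega) hx hy2 hy2ne
    exact (zpowers_le.mpr (pow_mem (mem_zpowers _) 2)) h1
  apply find_claw hcf ht1 hx1 hy1 hxy1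
  -- distinctness
  · exact fun h => hyX (h ▸ mem_zpowers x)
  · exact fun h => hyX (by
      have : y = 1 := mul_eq_left.mp h.symm
      exact this ▸ one_mem _)
  · exact fun h => hx1 (mul_eq_right.mp h.symm)
  -- adjacency
  · exact ⟨fun h => hx2 (h ▸ ht2'), Or.inl htx⟩
  · exact ⟨fun h => hyX (h ▸ htx), Or.inl hty⟩
  · exact ⟨fun h => hxyX (h ▸ htx), Or.inl htxy⟩
  -- non-adjacency
  · exact nonadj_x hx hmax hyX
  · exact nonadj_x hx hmax hxyX
  · rintro ⟨hne, h | h⟩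
    · have hxm : x ∈ zpowers (x*y) := by
        have h2 : (x*y) * y⁻¹ ∈ zpowers (x*y) := mul_mem (mem_zpowers _) (inv_mem h)
        simpa using h2
      exact hxyX (xmem hx hmax hxm)
    · have hxm : x ∈ zpowers y := by
        have h2 : (x*y) * y⁻¹ ∈ zpowers y := mul_mem h (inv_mem (mem_zpowers y))
        simpa using h2
      exact hyX (xmem hx hmax hxm)
end Main

section Cases
variable {G : Type*} [Group G] [Finite G] {x y : G} {k : ℕ}

lemma conj_pow_eq {y x g : G} (hconj : y * x * y⁻¹ = g) (n : ℕ) :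
    y * x^n * y⁻¹ = g^n := by rw [← hconj, conj_pow]

lemma x_mem_pow_odd (hx : orderOf x = 2^k) {c : ℕ} (hodd : Odd c) :
    x ∈ zpowers (x^c) := by
  apply mem_zpowers_self_pow
  rw [hx]
  refine Nat.Coprime.pow_right _ ?_
  rw [Nat.coprime_comm]
  exact (Nat.Prime.coprime_iff_not_dvd Nat.prime_two).mpr (by
    rcases hodd with ⟨a, rfl⟩; omega)

lemma sq_even (hx : orderOf x = 2^k) (hmax : ∀ g : G, orderOf g ≤ 2^k)
    (hyX : y ∉ zpowers x) (hy2 : y^2 ∈ zpowers x) : ∃ c : ℕ, y^2 = x^(2*c) := by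
  obtain ⟨i, hi⟩ := mem_zpow_nat hy2
  rcases Nat.even_or_odd i with ⟨c, rfl⟩ | hodd
  · exact ⟨c, by rw [hi]; congr 1; omega⟩
  · exfalso
    have hxm : x ∈ zpowers (x^i) := x_mem_pow_odd hx hodd
    rw [← hi] at hxm
    have hxy : x ∈ zpowers y := (zpowers_le.mpr (pow_mem (mem_zpowers y) 2)) hxm
    exact hyX (xmem hx hmax hxy)

lemma caseI (hcf : IsClawFree (reducedPowerGraph G)) (hG : IsPGroup 2 G)
    (hk : 3 ≤ k) (hx : orderOf x = 2^k) (hmax : ∀ g : G, orderOf g ≤ 2^k)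
    (hyX : y ∉ zpowers x) (hy2 : y^2 ∈ zpowers x) (hc : y * x = x * y) : False := by
  have hx4 : x^4 ≠ 1 := x4ne hk hx
  have hx2 : x^2 ≠ 1 := fun h => hx4 (by rw [show (4:ℕ) = 2*2 from rfl, pow_mul, h, one_pow])
  have hx1 : x ≠ 1 := fun h => hx4 (by rw [h, one_pow])
  set t := x ^ (2^(k-1)) with hts
  set w := x ^ (2^(k-2)) with hws
  have htx : t ∈ zpowers x := pow_mem (mem_zpowers x) _
  have hwx : w ∈ zpowers x := pow_mem (mem_zpowers x) _
  have ht1 : t ≠ 1 := htne (by omega) hx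
  have ht2' : t^2 = 1 := ht2 (by omega) hx
  have hw2 : w^2 = t := by
    rw [hws, hts, ← pow_mul]; congr 1
    rw [← pow_succ]; congr 1; omega
  have hw4 : w^4 = 1 := by rw [show (4:ℕ) = 2*2 from rfl, pow_mul, hw2, ht2']
  have ht4 : t^4 = 1 := by rw [show (4:ℕ) = 2*2 from rfl, pow_mul, ht2', one_pow]
  have hctw : Commute t w := (Commute.refl x).pow_pow _ _
  have htw4 : (t*w)^4 = 1 := by rw [hctw.mul_pow, ht4, hw4, one_mul]
  obtain ⟨c, hy2c⟩ := sq_even hx hmax hyX hy2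
  set u := y * (x^c)⁻¹ with hus
  have hyu : y = u * x^c := by rw [hus]; group
  have huX : u ∉ zpowers x := fun h => hyX (by
    rw [hyu]; exact mul_mem h (pow_mem (mem_zpowers x) c))
  have hcom : Commute y x := hc
  have hux : Commute u x := Commute.mul_left hcom (((Commute.refl x).pow_left c).inv_left)
  have hcc : y⁻¹ * x^c * y = x^c := by
    have h2 := (hcom.pow_right c).eq
    calc y⁻¹ * x^c * y = y⁻¹ * (x^c * y) := by group
    _ = y⁻¹ * (y * x^c) := by rw [← h2]
    _ = x^c := by group
  have hu2 : u^2 = 1 := by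
    have h1 : u^2 = y^2 * (y⁻¹ * x^c * y)⁻¹ * (x^c)⁻¹ := by
      rw [hus, pow_two, pow_two]; group
    rw [hcc, hy2c] at h1
    rw [h1]; group
  have hxuX : x*u ∉ zpowers x := mul_not_mem (mem_zpowers x) huX
  have hwuX : w*u ∉ zpowers x := mul_not_mem hwx huX
  have hu1 : u ≠ 1 := fun h => huX (by rw [h]; exact one_mem _)
  have hxu1 : x*u ≠ 1 := fun h => hxuX (by rw [h]; exact one_mem _)
  have hwu1 : w*u ≠ 1 := fun h => hwuX (by rw [h]; exact one_mem _)
  have huw : u * w = w * u := (hux.pow_right (2^(k-2))).eq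
  have hwu2 : (w*u)^2 = t := by
    calc (w*u)^2 = w*(u*w)*u := by rw [pow_two]; group
    _ = w*(w*u)*u := by rw [huw]
    _ = w^2*u^2 := by rw [pow_two, pow_two]; group
    _ = t := by rw [hw2, hu2, mul_one]
  have hxu2 : (x*u)^2 = x^2 := by
    calc (x*u)^2 = x*(u*x)*u := by rw [pow_two]; group
    _ = x*(x*u)*u := by rw [hux.eq]
    _ = x^2*u^2 := by rw [pow_two, pow_two]; group
    _ = x^2 := by rw [hu2, mul_one]
  have he21 : (2:ℕ) * 2^(k-2) = 2^(k-1) := by rw [← pow_succ']; congr 1; omega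
  have hxupow : (x*u)^(2^(k-1)) = t := by
    rw [← he21, pow_mul, hxu2, ← pow_mul, he21]
  have htxu : t ∈ zpowers (x*u) := by rw [← hxupow]; exact pow_mem (mem_zpowers _) _
  have htwu : t ∈ zpowers (w*u) := by rw [← hwu2]; exact pow_mem (mem_zpowers _) _
  apply find_claw hcf ht1 hx1 hxu1 hwu1
  · intro h; exact hu1 (mul_eq_left.mp h.symm)
  · intro h; apply hwuX; rw [← h]; exact mem_zpowers x
  · intro h
    have hxw : x = w := mul_right_cancel h
    exact hx4 (by rw [hxw, hw4])
  · exact ⟨fun h => hx2 (h ▸ ht2'), Or.inl htx⟩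
  · exact ⟨fun h => hxuX (by rw [← h]; exact htx), Or.inl htxu⟩
  · exact ⟨fun h => hwuX (by rw [← h]; exact htx), Or.inl htwu⟩
  · exact nonadj_x hx hmax hxuX
  · exact nonadj_x hx hmax hwuX
  · rintro ⟨hne, h | h⟩
    · rcases mem_ord4 hwu2 ht2' h with h0 | h0 | h0 | h0
      · exact hxu1 h0
      · exact hx4 (by rw [mul_right_cancel h0, hw4])
      · exact hxuX (by rw [h0]; exact htx)
      · have h1 : x*u = (t*w)*u := by rw [h0]; group
        have h2 : x = t*w := mul_right_cancel h1
        exact hx4 (by rw [h2, htw4])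
    · obtain ⟨c', hc'⟩ := mem_sq_decomp h
      rw [hxu2] at hc'
      rcases hc' with h0 | h0
      · exact hwuX (by rw [h0]; exact pow_mem (pow_mem (mem_zpowers x) 2) c')
      · have h1 : w*u = x^(2*c'+1)*u := by
          rw [h0, ← pow_mul, pow_succ, mul_assoc]
        have h2 : w = x^(2*c'+1) := mul_right_cancel h1
        apply LE1 hk hx (⟨c', by ring⟩ : Odd (2*c'+1))
        rw [show 4*(2*c'+1) = (2*c'+1)*4 by ring, pow_mul, ← h2, hw4]

lemma caseIII (hcf : IsClawFree (reducedPowerGraph G)) (hG : IsPGroup 2 G)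
    (hk : 3 ≤ k) (hx : orderOf x = 2^k) (hmax : ∀ g : G, orderOf g ≤ 2^k)
    (hyX : y ∉ zpowers x) (hy2 : y^2 ∈ zpowers x)
    (hconj : y * x * y⁻¹ = x * x^(2^(k-1))) : False := by
  have hx4 : x^4 ≠ 1 := x4ne hk hx
  have hx2 : x^2 ≠ 1 := fun h => hx4 (by rw [show (4:ℕ) = 2*2 from rfl, pow_mul, h, one_pow])
  have hx1 : x ≠ 1 := fun h => hx4 (by rw [h, one_pow])
  set t := x ^ (2^(k-1)) with hts
  set w := x ^ (2^(k-2)) with hws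
  have htx : t ∈ zpowers x := pow_mem (mem_zpowers x) _
  have hwx : w ∈ zpowers x := pow_mem (mem_zpowers x) _
  have ht1 : t ≠ 1 := htne (by omega) hx
  have ht2' : t^2 = 1 := ht2 (by omega) hx
  have hw2 : w^2 = t := by
    rw [hws, hts, ← pow_mul]; congr 1
    rw [← pow_succ]; congr 1; omega
  have hw4 : w^4 = 1 := by rw [show (4:ℕ) = 2*2 from rfl, pow_mul, hw2, ht2']
  have ht4 : t^4 = 1 := by rw [show (4:ℕ) = 2*2 from rfl, pow_mul, ht2', one_pow]
  have hctw : Commute t w := (Commute.refl x).pow_pow _ _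
  have htw4 : (t*w)^4 = 1 := by rw [hctw.mul_pow, ht4, hw4, one_mul]
  have hcxt : Commute x t := (Commute.refl x).pow_right _
  have he21 : (2:ℕ) * 2^(k-2) = 2^(k-1) := by rw [← pow_succ']; congr 1; omega
  have hevk1 : Even ((2:ℕ)^(k-1)) := ⟨2^(k-2), by omega⟩
  have hevk2 : Even ((2:ℕ)^(k-2)) := by
    have h1 : (2:ℕ) * 2^(k-3) = 2^(k-2) := by rw [← pow_succ']; congr 1; omega
    exact ⟨2^(k-3), by omega⟩
  have htt : t * t = 1 := by rw [← pow_two]; exact ht2'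
  have htinv : t⁻¹ = t := inv_eq_of_mul_eq_one_right htt
  have hty : y * t * y⁻¹ = t := by
    rw [hts, conj_pow_eq hconj, hcxt.mul_pow, ← hts, sq_pow_even ht2' hevk1, mul_one]
  have hty' : y⁻¹ * t * y = t := by
    calc y⁻¹ * t * y = y⁻¹ * (y*t*y⁻¹) * y := by rw [hty]
    _ = t := by group
  have hconj' : y⁻¹ * x * y = x * t := by
    have h1 : y⁻¹ * (y*x*y⁻¹) * y = x := by group
    rw [hconj] at h1
    have h2 : y⁻¹ * (x*t) * y = (y⁻¹*x*y) * (y⁻¹*t*y) := by group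
    rw [h2, hty'] at h1
    calc y⁻¹*x*y = (y⁻¹*x*y) * t * t⁻¹ := by group
    _ = x * t⁻¹ := by rw [h1]
    _ = x * t := by rw [htinv]
  have hconjN' : ∀ n : ℕ, y⁻¹ * x^n * y = x^n * t^n := by
    intro n
    have h4 := conj_pow (i := n) (a := y⁻¹) (b := x)
    rw [inv_inv] at h4
    rw [← h4, hconj', hcxt.mul_pow]
  obtain ⟨c, hy2c⟩ := sq_even hx hmax hyX hy2
  set u := y * (x^c)⁻¹ with hus
  have hyu : y = u * x^c := by rw [hus]; group
  have huX : u ∉ zpowers x := fun h => hyX (by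
    rw [hyu]; exact mul_mem h (pow_mem (mem_zpowers x) c))
  have hu1 : u ≠ 1 := fun h => huX (by rw [h]; exact one_mem _)
  have hy1 : y ≠ 1 := fun h => hyX (by rw [h]; exact one_mem _)
  have htc : t^c = x^(2^(k-1)*c) := by rw [hts, ← pow_mul]
  have hu2 : u^2 = (t^c)⁻¹ := by
    have h1 : u^2 = y^2 * (y⁻¹ * x^c * y)⁻¹ * (x^c)⁻¹ := by
      rw [hus, pow_two, pow_two]; group
    rw [hconjN' c, hy2c, htc] at h1
    have h3 : x^(2*c) * (x^c*x^(2^(k-1)*c))⁻¹ * (x^c)⁻¹ = (x^(2^(k-1)*c))⁻¹ := by group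
    rw [h3, ← htc] at h1
    exact h1
  rcases Nat.even_or_odd c with hcev | hcodd
  · -- c even : u is an involution with u x u⁻¹ = x t
    have hu2one : u^2 = 1 := by rw [hu2, sq_pow_even ht2' hcev, inv_one]
    have hconjux : u*x*u⁻¹ = x*t := by
      have h1 : u*x*u⁻¹ = y*x*y⁻¹ := by rw [hus]; group
      rw [h1, hconj]
    have huw : u * w = w * u := by
      have h1 : u*w*u⁻¹ = w := by
        rw [hws, conj_pow_eq hconjux, hcxt.mul_pow, ← hws, sq_pow_even ht2' hevk2, mul_one]
      calc u*w = (u*w*u⁻¹)*u := by group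
      _ = w*u := by rw [h1]
  -- copied structure from caseI for the claw (t; x, w*u, x*u)
    have hxuX : x*u ∉ zpowers x := mul_not_mem (mem_zpowers x) huX
    have hwuX : w*u ∉ zpowers x := mul_not_mem hwx huX
    have hxu1 : x*u ≠ 1 := fun h => hxuX (by rw [h]; exact one_mem _)
    have hwu1 : w*u ≠ 1 := fun h => hwuX (by rw [h]; exact one_mem _)
    have hwu2 : (w*u)^2 = t := by
      calc (w*u)^2 = w*(u*w)*u := by rw [pow_two]; group
      _ = w*(w*u)*u := by rw [huw]
      _ = w^2*u^2 := by rw [pow_two, pow_two]; group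
      _ = t := by rw [hw2, hu2one, mul_one]
    have hxu2 : (x*u)^2 = x^(2+2^(k-1)) := by
      calc (x*u)^2 = x*(u*x*u⁻¹)*u^2 := by rw [pow_two, pow_two]; group
      _ = x*(x*t)*1 := by rw [hconjux, hu2one]
      _ = x^(2+2^(k-1)) := by rw [hts, pow_add, pow_two]; group
    have hxupow : (x*u)^(2^(k-1)) = t := by
      have eB : (2:ℕ)^(k-1)*2^(k-2) = 2^k*2^(k-3) := by
        rw [← pow_add, ← pow_add]; congr 1; omega
      have e5 : (2+2^(k-1)) * 2^(k-2) = 2^k * 2^(k-3) + 2^(k-1) := by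
        calc (2+2^(k-1)) * 2^(k-2) = 2*2^(k-2) + 2^(k-1)*2^(k-2) := by ring
        _ = 2^k * 2^(k-3) + 2^(k-1) := by rw [he21, eB]; ring
      rw [← he21, pow_mul, hxu2, ← pow_mul, e5, pow_add, pow_mul, xpow2k hx, one_pow,
        one_mul, hts]
    have htxu : t ∈ zpowers (x*u) := by rw [← hxupow]; exact pow_mem (mem_zpowers _) _
    have htwu : t ∈ zpowers (w*u) := by rw [← hwu2]; exact pow_mem (mem_zpowers _) _
    apply find_claw hcf ht1 hx1 hxu1 hwu1
    · intro h; exact hu1 (mul_eq_left.mp h.symm)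
    · intro h; apply hwuX; rw [← h]; exact mem_zpowers x
    · intro h
      have hxw : x = w := mul_right_cancel h
      exact hx4 (by rw [hxw, hw4])
    · exact ⟨fun h => hx2 (h ▸ ht2'), Or.inl htx⟩
    · exact ⟨fun h => hxuX (by rw [← h]; exact htx), Or.inl htxu⟩
    · exact ⟨fun h => hwuX (by rw [← h]; exact htx), Or.inl htwu⟩
    · exact nonadj_x hx hmax hxuX
    · exact nonadj_x hx hmax hwuX
    · rintro ⟨hne, h | h⟩
      · rcases mem_ord4 hwu2 ht2' h with h0 | h0 | h0 | h0
        · exact hxu1 h0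
        · exact hx4 (by rw [mul_right_cancel h0, hw4])
        · exact hxuX (by rw [h0]; exact htx)
        · have h1 : x*u = (t*w)*u := by rw [h0]; group
          have h2 : x = t*w := mul_right_cancel h1
          exact hx4 (by rw [h2, htw4])
      · obtain ⟨c', hc'⟩ := mem_sq_decomp h
        rw [hxu2] at hc'
        rcases hc' with h0 | h0
        · exact hwuX (by rw [h0]; exact pow_mem (pow_mem (mem_zpowers x) _) c')
        · have h1 : w*u = x^((2+2^(k-1))*c'+1)*u := by
            rw [h0, ← pow_mul, pow_succ, mul_assoc]
          have h2 : w = x^((2+2^(k-1))*c'+1) := mul_right_cancel h1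
          have hoddE : Odd ((2+2^(k-1))*c'+1) := by
            refine ⟨c' + 2^(k-2)*c', ?_⟩
            rw [← he21]; ring
          apply LE1 hk hx hoddE
          rw [show 4*((2+2^(k-1))*c'+1) = ((2+2^(k-1))*c'+1)*4 by ring, pow_mul, ← h2, hw4]
  · -- c odd : u^2 = t, claw (t; x, y, u)
    have hu2t : u^2 = t := by rw [hu2, sq_pow_odd ht2' hcodd, htinv]
    have hxc1 : x^c ≠ 1 := by
      intro h
      have hdvd : 2^k ∣ c := hx ▸ orderOf_dvd_iff_pow_eq_one.mpr h
      have h2d : (2:ℕ) ∣ 2^k := dvd_pow_self 2 (by omega)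
      obtain ⟨a, ha⟩ := hcodd
      obtain ⟨e, he⟩ := dvd_trans h2d hdvd
      omega
    have hy2ne1 : y^2 ≠ 1 := by
      intro h
      rw [hy2c] at h
      have hdvd : 2^k ∣ 2*c := hx ▸ orderOf_dvd_iff_pow_eq_one.mpr h
      have h4d : (4:ℕ) ∣ 2^k := by
        calc (4:ℕ) = 2^2 := by norm_num
        _ ∣ 2^k := pow_dvd_pow 2 (by omega)
      obtain ⟨a, ha⟩ := hcodd
      obtain ⟨e, he⟩ := dvd_trans h4d hdvd
      omega
    have hx2c : x^(2*c) ≠ 1 := by rw [← hy2c]; exact hy2ne1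
    have htymem : t ∈ zpowers y :=
      (zpowers_le.mpr (pow_mem (mem_zpowers y) 2)) (t_mem hG (by omega) hx hy2 hy2ne1)
    have htu : t ∈ zpowers u := by rw [← hu2t]; exact pow_mem (mem_zpowers u) 2
    have hyneu : y ≠ u := by
      intro h
      rw [hus] at h
      have := mul_eq_left.mp h.symm
      exact hxc1 (inv_eq_one.mp this)
    apply find_claw hcf ht1 hx1 hy1 hu1
    · exact fun h => hyX (h ▸ mem_zpowers x)
    · exact fun h => huX (h ▸ mem_zpowers x)
    · exact hyneu
    · exact ⟨fun h => hx2 (h ▸ ht2'), Or.inl htx⟩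
    · exact ⟨fun h => hyX (by rw [← h]; exact htx), Or.inl htymem⟩
    · exact ⟨fun h => huX (by rw [← h]; exact htx), Or.inl htu⟩
    · exact nonadj_x hx hmax hyX
    · exact nonadj_x hx hmax huX
    · rintro ⟨hne, h | h⟩
      case inr h =>
        have hxcy : x^c ∈ zpowers y := by
          have h2 : u⁻¹ * y ∈ zpowers y := mul_mem (inv_mem h) (mem_zpowers y)
          have h3 : u⁻¹ * y = x^c := by rw [hus]; group
          rwa [h3] at h2
        have hxy : x ∈ zpowers y :=
          (zpowers_le.mpr hxcy) (x_mem_pow_odd hx hcodd)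
        exact hyX (xmem hx hmax hxy)
      case inl h =>
        rcases mem_ord4 hu2t ht2' h with h0 | h0 | h0 | h0
        · exact hy1 h0
        · exact hyneu h0
        · exact hyX (by rw [h0]; exact htx)
        · -- y = t * u
          have h1 : y * x^c = t * y := by
            calc y * x^c = (t*(y*(x^c)⁻¹)) * x^c := by rw [← hus, ← h0]
            _ = t*y := by group
          have h2 : x^c = t := by
            calc x^c = y⁻¹*(y*x^c) := by group
            _ = y⁻¹*(t*y) := by rw [h1]
            _ = y⁻¹*t*y := by group
            _ = t := hty'
          apply hx2c
          rw [show 2*c = c*2 by ring, pow_mul, h2, ht2']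
end Cases

section CaseIV
variable {G : Type*} [Group G] [Finite G] {x y : G} {k : ℕ}

lemma caseIV (hcf : IsClawFree (reducedPowerGraph G)) (hG : IsPGroup 2 G)
    (hk : 3 ≤ k) (hx : orderOf x = 2^k) (hmax : ∀ g : G, orderOf g ≤ 2^k)
    (hyX : y ∉ zpowers x) (hy2 : y^2 ∈ zpowers x)
    (hconj : y * x * y⁻¹ = x⁻¹ * x^(2^(k-1))) : False := by
  have hx4 : x^4 ≠ 1 := x4ne hk hx
  have hx2 : x^2 ≠ 1 := fun h => hx4 (by rw [show (4:ℕ) = 2*2 from rfl, pow_mul, h, one_pow])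
  have hx1 : x ≠ 1 := fun h => hx4 (by rw [h, one_pow])
  set t := x ^ (2^(k-1)) with hts
  set w := x ^ (2^(k-2)) with hws
  have htx : t ∈ zpowers x := pow_mem (mem_zpowers x) _
  have hwx : w ∈ zpowers x := pow_mem (mem_zpowers x) _
  have ht1 : t ≠ 1 := htne (by omega) hx
  have ht2' : t^2 = 1 := ht2 (by omega) hx
  have hw2 : w^2 = t := by
    rw [hws, hts, ← pow_mul]; congr 1
    rw [← pow_succ]; congr 1; omega
  have hw4 : w^4 = 1 := by rw [show (4:ℕ) = 2*2 from rfl, pow_mul, hw2, ht2']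
  have hcxt : Commute x t := (Commute.refl x).pow_right _
  have hcxit : Commute x⁻¹ t := hcxt.inv_left
  have he21 : (2:ℕ) * 2^(k-2) = 2^(k-1) := by rw [← pow_succ']; congr 1; omega
  have hevk1 : Even ((2:ℕ)^(k-1)) := ⟨2^(k-2), by omega⟩
  have hevk2 : Even ((2:ℕ)^(k-2)) := by
    have h1 : (2:ℕ) * 2^(k-3) = 2^(k-2) := by rw [← pow_succ']; congr 1; omega
    exact ⟨2^(k-3), by omega⟩
  have htt : t * t = 1 := by rw [← pow_two]; exact ht2'
  have htinv : t⁻¹ = t := inv_eq_of_mul_eq_one_right htt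
  have hy1 : y ≠ 1 := fun h => hyX (by rw [h]; exact one_mem _)
  -- conjugation of powers : y * x^n * y⁻¹ = (x^n)⁻¹ * t^n
  have hconjN : ∀ n : ℕ, y * x^n * y⁻¹ = (x^n)⁻¹ * t^n := by
    intro n
    rw [conj_pow_eq hconj, hcxit.mul_pow, inv_pow]
  have hty : y * t * y⁻¹ = t := by
    have h1 := hconjN (2^(k-1))
    rw [← hts, sq_pow_even ht2' hevk1, htinv] at h1
    rw [h1, mul_one]
  have hty' : y⁻¹ * t * y = t := by
    calc y⁻¹ * t * y = y⁻¹ * (y*t*y⁻¹) * y := by rw [hty]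
    _ = t := by group
  -- y^2 = 1 or y^2 = t
  have hy2cases : y^2 = 1 ∨ y^2 = t := by
    obtain ⟨i, hi⟩ := mem_zpow_nat hy2
    have hyy : y * y^2 * y⁻¹ = y^2 := by group
    rw [hi] at hyy
    rw [hconjN i] at hyy
    have h5 : x^i * x^i = t^i := by
      calc x^i * x^i = x^i * ((x^i)⁻¹ * t^i) := by rw [hyy]
      _ = t^i := by group
    rw [← pow_add] at h5
    rcases Nat.even_or_odd i with hiev | hiodd
    · rw [sq_pow_even ht2' hiev] at h5
      have hdvd : 2^k ∣ i + i := hx ▸ orderOf_dvd_iff_pow_eq_one.mpr h5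
      have h2k : (2:ℕ)^(k-1) * 2 = 2^k := by rw [← pow_succ]; congr 1; omega
      obtain ⟨e, he⟩ : 2^(k-1) ∣ i := by
        rcases hdvd with ⟨d, hd⟩
        refine ⟨d, Nat.eq_of_mul_eq_mul_right (by norm_num : 0 < 2) ?_⟩
        have hd2 : i + i = (2^(k-1)*d)*2 := by rw [hd, ← h2k]; ring
        omega
      subst he
      rw [hi, pow_mul, ← hts]
      rcases Nat.even_or_odd e with heev | heodd
      · left; exact sq_pow_even ht2' heev
      · right; exact sq_pow_odd ht2' heodd
    · exfalso
      rw [sq_pow_odd ht2' hiodd, hts] at h5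
      have hmod : (i+i) ≡ 2^(k-1) [MOD 2^k] := by
        rw [← hx]
        exact pow_eq_pow_iff_modEq.mp h5
      have hdvd := hmod.dvd
      have h4k : ((4:ℤ)) ∣ ((2:ℤ))^k := by
        calc (4:ℤ) = 2^2 := by norm_num
        _ ∣ 2^k := pow_dvd_pow 2 (by omega)
      have h4k1 : ((4:ℤ)) ∣ ((2:ℤ))^(k-1) := by
        calc (4:ℤ) = 2^2 := by norm_num
        _ ∣ 2^(k-1) := pow_dvd_pow 2 (by omega)
      have hcast : ((2:ℤ))^(k-1) - ((i:ℤ) + i) = 2^k * (hdvd.choose) := by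
        have := hdvd.choose_spec
        push_cast at this ⊢
        linarith [this]
      have h4d : (4:ℤ) ∣ (2:ℤ)^(k-1) - ((i:ℤ)+i) := by
        rw [hcast]
        exact Dvd.dvd.mul_right h4k _
      obtain ⟨a, ha⟩ := hiodd
      obtain ⟨f, hf⟩ := h4d
      obtain ⟨g1, hg1⟩ := h4k1
      rw [hg1] at hf
      push_cast [ha] at hf
      omega
  rcases hy2cases with hy21 | hy2t
  · -- y^2 = 1 : claw (t ; x, x*y, x^3*y)
    have hxyX : x*y ∉ zpowers x := mul_not_mem (mem_zpowers x) hyX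
    have hx3yX : x^3*y ∉ zpowers x := mul_not_mem (pow_mem (mem_zpowers x) 3) hyX
    have hxy1 : x*y ≠ 1 := fun h => hxyX (by rw [h]; exact one_mem _)
    have hx3y1 : x^3*y ≠ 1 := fun h => hx3yX (by rw [h]; exact one_mem _)
    have hxy2 : (x*y)^2 = t := by
      calc (x*y)^2 = x*(y*x*y⁻¹)*y^2 := by rw [pow_two, pow_two]; group
      _ = x*(x⁻¹*t)*1 := by rw [hconj, hy21]
      _ = t := by group
    have hx3y2 : (x^3*y)^2 = t := by
      calc (x^3*y)^2 = x^3*(y*x^3*y⁻¹)*y^2 := by rw [pow_two, pow_two]; group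
      _ = x^3*((x^3)⁻¹*t^3)*y^2 := by rw [hconjN 3]
      _ = t^3 := by rw [hy21]; group
      _ = t := sq_pow_odd ht2' ⟨1, by norm_num⟩
    have htxy : t ∈ zpowers (x*y) := by rw [← hxy2]; exact pow_mem (mem_zpowers _) _
    have htx3y : t ∈ zpowers (x^3*y) := by rw [← hx3y2]; exact pow_mem (mem_zpowers _) _
    have hx3x : x^3 ≠ x := by
      intro h
      apply hx2
      have h1 : x*x^2 = x^3 := by rw [← pow_succ']
      have h2 : x*x^2 = x*1 := by rw [mul_one, h1, h]
      exact mul_left_cancel h2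
    apply find_claw hcf ht1 hx1 hxy1 hx3y1
    · intro h
      exact hy1 (mul_eq_left.mp h.symm)
    · intro h
      apply hyX
      have h9 : y = (x^3)⁻¹ * x := by nth_rewrite 2 [h]; group
      rw [h9]
      exact mul_mem (inv_mem (pow_mem (mem_zpowers x) 3)) (mem_zpowers x)
    · intro h
      exact hx3x (mul_right_cancel h.symm)
    · exact ⟨fun h => hx2 (h ▸ ht2'), Or.inl htx⟩
    · exact ⟨fun h => hxyX (by rw [← h]; exact htx), Or.inl htxy⟩
    · exact ⟨fun h => hx3yX (by rw [← h]; exact htx), Or.inl htx3y⟩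
    · exact nonadj_x hx hmax hxyX
    · exact nonadj_x hx hmax hx3yX
    · rintro ⟨hne, h | h⟩
      · rcases mem_ord4 hx3y2 ht2' h with h0 | h0 | h0 | h0
        · exact hxy1 h0
        · exact hx3x (mul_right_cancel h0).symm
        · exact hxyX (by rw [h0]; exact htx)
        · -- x*y = t*(x^3*y)  ⇒  x = t*x^3  ⇒ x^2 = t
          have h1 : x*y = (t*x^3)*y := by rw [h0]; group
          have h2 : x = t*x^3 := mul_right_cancel h1
          have h3 : (1:G)*x = (t*x^2)*x := by
            rw [one_mul]
            calc x = t*x^3 := h2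
            _ = (t*x^2)*x := by rw [pow_succ]; group
          have h4 : (1:G) = t*x^2 := mul_right_cancel h3
          have h5 : x^2 = t⁻¹ := by
            have h6 : t*x^2 = 1 := h4.symm
            calc x^2 = t⁻¹*(t*x^2) := by group
            _ = t⁻¹ := by rw [h6, mul_one]
          apply hx4
          rw [show (4:ℕ) = 2*2 from rfl, pow_mul, h5, htinv, ht2']
      · rcases mem_ord4 hxy2 ht2' h with h0 | h0 | h0 | h0
        · exact hx3y1 h0
        · exact hx3x (mul_right_cancel h0)
        · exact hx3yX (by rw [h0]; exact htx)
        · -- x^3*y = t*(x*y) ⇒ x^3 = t*x ⇒ x^2 = t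
          have h1 : x^3*y = (t*x)*y := by rw [h0]; group
          have h2 : x^3 = t*x := mul_right_cancel h1
          have h3 : x^2*x = t*x := by rw [← pow_succ]; exact h2
          have h5 : x^2 = t := mul_right_cancel h3
          apply hx4
          rw [show (4:ℕ) = 2*2 from rfl, pow_mul, h5, ht2']
  · -- y^2 = t : claw (t ; x, y, w*y)
    have hwyX : w*y ∉ zpowers x := mul_not_mem hwx hyX
    have hwy1 : w*y ≠ 1 := fun h => hwyX (by rw [h]; exact one_mem _)
    have hconjw : y*w*y⁻¹ = w⁻¹ := by
      have h1 := hconjN (2^(k-2))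
      rw [← hws, sq_pow_even ht2' hevk2, mul_one] at h1
      exact h1
    have hwy2 : (w*y)^2 = t := by
      calc (w*y)^2 = w*(y*w*y⁻¹)*y^2 := by rw [pow_two, pow_two]; group
      _ = w*w⁻¹*t := by rw [hconjw, hy2t]
      _ = t := by group
    have htwy : t ∈ zpowers (w*y) := by rw [← hwy2]; exact pow_mem (mem_zpowers _) _
    have htymem : t ∈ zpowers y := by rw [← hy2t]; exact pow_mem (mem_zpowers y) 2
    have hw1 : w ≠ 1 := fun h => ht1 (by rw [← hw2, h, one_pow])
    have htnw : t ≠ w := by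
      intro h
      apply ht1
      have h4 : t*t = t := by
        calc t*t = w*w := by rw [h]
        _ = t := by rw [← pow_two, hw2]
      have h5 : t*t = t*1 := by rw [mul_one]; exact h4
      exact mul_left_cancel h5
    apply find_claw hcf ht1 hx1 hy1 hwy1
    · exact fun h => hyX (h ▸ mem_zpowers x)
    · intro h; apply hwyX; rw [← h]; exact mem_zpowers x
    · intro h
      exact hw1 (mul_eq_right.mp h.symm)
    · exact ⟨fun h => hx2 (h ▸ ht2'), Or.inl htx⟩
    · exact ⟨fun h => hyX (by rw [← h]; exact htx), Or.inl htymem⟩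
    · exact ⟨fun h => hwyX (by rw [← h]; exact htx), Or.inl htwy⟩
    · exact nonadj_x hx hmax hyX
    · exact nonadj_x hx hmax hwyX
    · rintro ⟨hne, h | h⟩
      · -- y ∈ zpowers (w*y)
        rcases mem_ord4 hwy2 ht2' h with h0 | h0 | h0 | h0
        · exact hy1 h0
        · exact hw1 (mul_eq_right.mp h0.symm)
        · exact hyX (by rw [h0]; exact htx)
        · -- y = t*(w*y) ⇒ t*w = 1 ⇒ w = t⁻¹ = t
          have h1 : (t*w)*y = y := by rw [← mul_assoc] at h0; exact h0.symm
          have h2 : t*w = 1 := mul_eq_right.mp h1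
          have h3 : t = w := by
            calc t = t⁻¹ := htinv.symm
            _ = t⁻¹*(t*w) := by rw [h2, mul_one]
            _ = w := by group
          exact htnw h3
      · -- w*y ∈ zpowers y
        rcases mem_ord4 hy2t ht2' h with h0 | h0 | h0 | h0
        · exact hwy1 h0
        · exact hw1 (mul_eq_right.mp h0)
        · apply hyX
          have h1 : y = w⁻¹*t := by rw [← h0]; group
          rw [h1]
          exact mul_mem (inv_mem hwx) htx
        · -- w*y = t*y ⇒ w = t
          exact htnw (mul_right_cancel h0).symm
    end CaseIV

section Star
lemma int8_not (s : ℤ) (h : (8:ℤ) ∣ s^2 + 1) : False := by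
  rcases Int.even_or_odd s with ⟨a, rfl⟩ | ⟨a, rfl⟩
  · obtain ⟨e, he⟩ := h
    have hA : (a + a)^2 = 4 * (a*a) := by ring
    rw [hA] at he
    omega
  · obtain ⟨e, he⟩ := h
    have hA : (2*a + 1)^2 = 4 * (a*a) + 4*a + 1 := by ring
    rw [hA] at he
    omega

lemma sq_one_mod_pow (k : ℕ) (hk : 3 ≤ k) (r : ℤ) (h : (2:ℤ)^k ∣ r^2 - 1) :
    (2:ℤ)^k ∣ r - 1 ∨ (2:ℤ)^k ∣ r + 1 ∨
    (2:ℤ)^k ∣ r - 1 - 2^(k-1) ∨ (2:ℤ)^k ∣ r + 1 - 2^(k-1) := by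
  have h8 : (8:ℤ) ∣ (2:ℤ)^k := by
    calc (8:ℤ) = 2^3 := by norm_num
    _ ∣ 2^k := pow_dvd_pow 2 hk
  -- r is odd
  have hodd : Odd r := by
    rcases Int.even_or_odd r with ⟨a, rfl⟩ | ho
    · exfalso
      have h2 : (2:ℤ) ∣ (a+a)^2 - 1 := dvd_trans (by norm_num) (dvd_trans h8 h)
      obtain ⟨e, he⟩ := h2
      have : (a+a)^2 = 4*(a*a) := by ring
      omega
    · exact ho
  obtain ⟨s, rfl⟩ := hodd
  have hfac : (2*s+1)^2 - 1 = 4 * (s * (s+1)) := by ring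
  rw [hfac] at h
  have hk2 : (2:ℤ)^k = 4 * 2^(k-2) := by
    have : k = 2 + (k - 2) := by omega
    rw [this, pow_add]; norm_num
  have hdvd : (2:ℤ)^(k-2) ∣ s * (s+1) := by
    rw [hk2] at h
    exact (mul_dvd_mul_iff_left (by norm_num : (4:ℤ) ≠ 0)).mp h
  have hk12 : (2:ℤ)^(k-1) = 2^(k-2) * 2 := by
    rw [← pow_succ]; congr 1; omega
  have hkk : (2:ℤ)^k = 2^(k-1) * 2 := by
    rw [← pow_succ]; congr 1; omega
  rcases Int.even_or_odd s with ⟨a, rfl⟩ | ⟨a, rfl⟩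
  · -- s even : 2^(k-2) ∣ s
    have hcop : IsCoprime ((2:ℤ)^(k-2)) (a + a + 1) :=
      IsCoprime.pow_left ⟨-a, 1, by ring⟩
    have hds : (2:ℤ)^(k-2) ∣ (a + a) := hcop.dvd_of_dvd_mul_right
      (by rw [show (a+a) * ((a+a)+1) = (a+a)*(a+a+1) by ring] at hdvd; exact hdvd)
    obtain ⟨u, hu⟩ := hds
    rcases Int.even_or_odd u with ⟨v, rfl⟩ | ⟨v, rfl⟩
    · left
      have : 2*(a+a)+1 - 1 = 2^k * v := by rw [hu, hkk, hk12]; ring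
      exact ⟨v, this⟩
    · right; right; left
      have : 2*(a+a)+1 - 1 - 2^(k-1) = 2^k * v := by rw [hu, hkk, hk12]; ring
      exact ⟨v, this⟩
  · -- s odd : 2^(k-2) ∣ s+1
    have hcop : IsCoprime ((2:ℤ)^(k-2)) (2*a + 1) :=
      IsCoprime.pow_left ⟨-a, 1, by ring⟩
    have hds : (2:ℤ)^(k-2) ∣ (2*a + 1 + 1) := hcop.dvd_of_dvd_mul_right
      (by have : (2*a+1) * ((2*a+1)+1) = (2*a+1+1)*(2*a+1) := by ring
          rw [this] at hdvd; exact hdvd)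
    obtain ⟨u, hu⟩ := hds
    rcases Int.even_or_odd u with ⟨v, rfl⟩ | ⟨v, rfl⟩
    · right; left
      have : 2*(2*a+1)+1 + 1 = 2^k * v := by rw [hkk, hk12]; linarith [hu]
      exact ⟨v, this⟩
    · right; right; right
      have : 2*(2*a+1)+1 + 1 - 2^(k-1) = 2^k * v := by rw [hkk, hk12]; linarith [hu]
      exact ⟨v, this⟩

variable {G : Type*} [Group G] [Finite G] {x y : G} {k : ℕ}

lemma star (hcf : IsClawFree (reducedPowerGraph G)) (hG : IsPGroup 2 G)
    (hk : 3 ≤ k) (hx : orderOf x = 2^k) (hmax : ∀ g : G, orderOf g ≤ 2^k)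
    (hyX : y ∉ zpowers x) (hy2 : y^2 ∈ zpowers x)
    (hyc : y * x * y⁻¹ ∈ zpowers x) : y * x * y⁻¹ = x⁻¹ ∧ y^2 = 1 := by
  obtain ⟨r, hr⟩ := mem_zpowers_iff.mp hyc
  have hcomm : Commute x (y^2) := by
    obtain ⟨z, hz⟩ := mem_zpowers_iff.mp hy2
    rw [← hz]; exact Commute.zpow_right (Commute.refl x) z
  have hxr2 : x ^ (r*r) = x := by
    calc x ^ (r*r) = (x^r)^r := by rw [← zpow_mul, mul_comm]
    _ = (y*x*y⁻¹)^r := by rw [hr]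
    _ = y*(x^r)*y⁻¹ := conj_zpow
    _ = y*(y*x*y⁻¹)*y⁻¹ := by rw [hr]
    _ = y^2 * x * (y^2)⁻¹ := by rw [pow_two]; group
    _ = x := by
        have h9 := hcomm.symm.eq
        calc y^2 * x * (y^2)⁻¹ = x * y^2 * (y^2)⁻¹ := by rw [h9]
        _ = x := by group
  have hdvd : ((2:ℤ))^k ∣ r^2 - 1 := by
    have h1 : x ^ (r*r - 1) = 1 := by
      rw [zpow_sub, hxr2, zpow_one]; group
    have h2 : (orderOf x : ℤ) ∣ r*r-1 := orderOf_dvd_iff_zpow_eq_one.mpr h1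
    rw [hx] at h2
    push_cast at h2
    rw [pow_two]
    exact h2
  have hzz : ∀ s : ℤ, (2:ℤ)^k ∣ s → x ^ s = 1 := by
    intro s hs
    apply orderOf_dvd_iff_zpow_eq_one.mp
    rw [hx]; push_cast; exact hs
  rcases sq_one_mod_pow k hk r hdvd with h | h | h | h
  · -- x^r = x : commuting case, contradiction
    exfalso
    have hxr : x ^ r = x := by
      calc x^r = x^((1:ℤ) + (r-1)) := by congr 1; ring
      _ = x * x^(r-1) := by rw [zpow_add, zpow_one]
      _ = x := by rw [hzz _ h, mul_one]
    have hconj1 : y*x*y⁻¹ = x := by rw [← hr, hxr]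
    have hcomm1 : y*x = x*y := by
      calc y*x = (y*x*y⁻¹)*y := by group
      _ = x*y := by rw [hconj1]
    exact caseI hcf hG hk hx hmax hyX hy2 hcomm1
  · -- x^r = x⁻¹ : good case
    have hxr : x ^ r = x⁻¹ := by
      calc x^r = x^((-1:ℤ) + (r+1)) := by congr 1; ring
      _ = x⁻¹ * x^(r+1) := by rw [zpow_add, zpow_neg_one]
      _ = x⁻¹ := by rw [hzz _ h, mul_one]
    have hconj2 : y*x*y⁻¹ = x⁻¹ := by rw [← hr, hxr]
    refine ⟨hconj2, ?_⟩
    by_contra hy2ne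
    exact caseII hcf hG hk hx hmax hyX hy2 hconj2 hy2ne
  · exfalso
    have hxr : x ^ r = x * x^(2^(k-1)) := by
      calc x^r = x^((1:ℤ) + ((2^(k-1):ℕ):ℤ) + (r - 1 - 2^(k-1))) := by
            congr 1; push_cast; ring
      _ = x * x^(((2^(k-1):ℕ)):ℤ) * x^(r-1-2^(k-1)) := by
            rw [zpow_add, zpow_add, zpow_one]
      _ = x * x^(2^(k-1)) := by rw [hzz _ h, mul_one, zpow_natCast]
    have hconj3 : y*x*y⁻¹ = x * x^(2^(k-1)) := by rw [← hr, hxr]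
    exact caseIII hcf hG hk hx hmax hyX hy2 hconj3
  · exfalso
    have hxr : x ^ r = x⁻¹ * x^(2^(k-1)) := by
      calc x^r = x^((-1:ℤ) + ((2^(k-1):ℕ):ℤ) + (r + 1 - 2^(k-1))) := by
            congr 1; push_cast; ring
      _ = x⁻¹ * x^(((2^(k-1):ℕ)):ℤ) * x^(r+1-2^(k-1)) := by
            rw [zpow_add, zpow_add, zpow_neg_one]
      _ = x⁻¹ * x^(2^(k-1)) := by rw [hzz _ h, mul_one, zpow_natCast]
    have hconj4 : y*x*y⁻¹ = x⁻¹ * x^(2^(k-1)) := by rw [← hr, hxr]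
    exact caseIV hcf hG hk hx hmax hyX hy2 hconj4

lemma norm_sq (hcf : IsClawFree (reducedPowerGraph G)) (hG : IsPGroup 2 G)
    (hk : 3 ≤ k) (hx : orderOf x = 2^k) (hmax : ∀ g : G, orderOf g ≤ 2^k)
    {z : G} (hz : z ∈ Subgroup.normalizer (zpowers x : Set G))
    (hzX : z ∉ zpowers x) : z * x * z⁻¹ = x⁻¹ ∧ z^2 = 1 := by
  have hex : ∃ j, z ^ (2^j) ∈ zpowers x := by
    obtain ⟨m, hm⟩ := hG z
    exact ⟨m, by rw [hm]; exact one_mem _⟩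
  classical
  obtain ⟨j, hjmem, hjmin⟩ : ∃ j, z^(2^j) ∈ zpowers x ∧ ∀ i, i < j → z^(2^i) ∉ zpowers x :=
    ⟨Nat.find hex, Nat.find_spec hex, fun i hi => Nat.find_min hex hi⟩
  have hj1 : 1 ≤ j := by
    rcases Nat.eq_zero_or_pos j with hj0 | h
    · exfalso; apply hzX; rw [hj0] at hjmem; simpa using hjmem
    · exact h
  have hnorm : ∀ g : G, g ∈ Subgroup.normalizer (zpowers x : Set G) → g * x * g⁻¹ ∈ zpowers x := by
    intro g hg
    exact (Subgroup.mem_normalizer_iff.mp hg x).mp (mem_zpowers x)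
  have hsq : (z ^ (2^(j-1)))^2 = z^(2^j) := by
    rw [← pow_mul]; congr 1; rw [← pow_succ]; congr 1; omega
  have hyX' : z ^ (2^(j-1)) ∉ zpowers x := hjmin _ (by omega)
  have hy2' : (z ^ (2^(j-1)))^2 ∈ zpowers x := by rw [hsq]; exact hjmem
  have hstar := star hcf hG hk hx hmax hyX' hy2' (hnorm _ (pow_mem hz _))
  rcases Nat.lt_or_ge j 2 with hj2 | hj2
  · have hj1' : j = 1 := by omega
    subst hj1'
    norm_num at hstar
    exact hstar
  · exfalso
    have hvX : z ^ (2^(j-2)) ∉ zpowers x := hjmin _ (by omega)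
    have hvsq : (z ^ (2^(j-2)))^2 = z^(2^(j-1)) := by
      rw [← pow_mul]; congr 1; rw [← pow_succ]; congr 1; omega
    obtain ⟨s, hs⟩ := mem_zpowers_iff.mp (hnorm _ (pow_mem hz (2^(j-2))))
    have hxs2 : x ^ (s*s) = (z^(2^(j-2)))^2 * x * ((z^(2^(j-2)))^2)⁻¹ := by
      calc x^(s*s) = (x^s)^s := by rw [← zpow_mul, mul_comm]
      _ = (z^(2^(j-2))*x*(z^(2^(j-2)))⁻¹)^s := by rw [hs]
      _ = z^(2^(j-2))*(x^s)*(z^(2^(j-2)))⁻¹ := conj_zpow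
      _ = z^(2^(j-2))*(z^(2^(j-2))*x*(z^(2^(j-2)))⁻¹)*(z^(2^(j-2)))⁻¹ := by rw [hs]
      _ = (z^(2^(j-2)))^2*x*((z^(2^(j-2)))^2)⁻¹ := by group
    rw [hvsq, hstar.1] at hxs2
    have h1 : x ^ (s*s + 1) = 1 := by rw [zpow_add, hxs2, zpow_one]; group
    have h2 : (orderOf x : ℤ) ∣ s*s + 1 := orderOf_dvd_iff_zpow_eq_one.mpr h1
    rw [hx] at h2
    push_cast at h2
    have h8 : (8:ℤ) ∣ s*s+1 := by
      refine dvd_trans ?_ h2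
      calc (8:ℤ) = 2^3 := by norm_num
      _ ∣ 2^k := pow_dvd_pow 2 hk
    exact int8_not s (by rw [pow_two]; exact h8)

lemma cent_eq (hcf : IsClawFree (reducedPowerGraph G)) (hG : IsPGroup 2 G)
    (hk : 3 ≤ k) (hx : orderOf x = 2^k) (hmax : ∀ g : G, orderOf g ≤ 2^k)
    {c : G} (hc : c * x = x * c) : c ∈ zpowers x := by
  by_contra hcX
  have hccx : Commute c x := hc
  have hcn : c ∈ Subgroup.normalizer (zpowers x : Set G) := by
    rw [Subgroup.mem_normalizer_iff]
    intro h
    constructor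
    · intro hh
      obtain ⟨m, hm⟩ := mem_zpowers_iff.mp hh
      have hcom : Commute c h := by rw [← hm]; exact hccx.zpow_right m
      have h1 : c*h*c⁻¹ = h := by
        calc c*h*c⁻¹ = (c*h)*c⁻¹ := by group
        _ = (h*c)*c⁻¹ := by rw [hcom.eq]
        _ = h := by group
      rw [h1]; exact hh
    · intro hh
      obtain ⟨m, hm⟩ := mem_zpowers_iff.mp hh
      have hcom : Commute c (x^m) := hccx.zpow_right m
      have h1 : h = x^m := by
        calc h = c⁻¹*(c*h*c⁻¹)*c := by group
        _ = c⁻¹*(x^m)*c := by rw [hm]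
        _ = c⁻¹*(x^m*c) := by group
        _ = c⁻¹*(c*x^m) := by rw [← hcom.eq]
        _ = x^m := by group
      rw [h1]; exact zpow_mem (mem_zpowers x) m
  have hns := (norm_sq hcf hG hk hx hmax hcn hcX).1
  have h1 : c*x*c⁻¹ = x := by
    calc c*x*c⁻¹ = (x*c)*c⁻¹ := by rw [hc]
    _ = x := by group
  have h2 : x = x⁻¹ := by rw [← hns]; exact h1.symm
  have hx4 : x^4 ≠ 1 := x4ne hk hx
  apply hx4
  have h3 : x*x = 1 := by nth_rewrite 2 [h2]; group
  have h4 : x^2 = 1 := by rw [pow_two]; exact h3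
  rw [show (4:ℕ) = 2*2 from rfl, pow_mul, h4, one_pow]

lemma coset (hcf : IsClawFree (reducedPowerGraph G)) (hG : IsPGroup 2 G)
    (hk : 3 ≤ k) (hx : orderOf x = 2^k) (hmax : ∀ g : G, orderOf g ≤ 2^k)
    {y₀ z : G} (hy0n : y₀ ∈ Subgroup.normalizer (zpowers x : Set G)) (hy0X : y₀ ∉ zpowers x)
    (hz : z ∈ Subgroup.normalizer (zpowers x : Set G)) : z ∈ zpowers x ∨ z*y₀ ∈ zpowers x := by
  by_cases hzX : z ∈ zpowers x
  · exact Or.inl hzX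
  · right
    have h1 := norm_sq hcf hG hk hx hmax hz hzX
    have h0 := norm_sq hcf hG hk hx hmax hy0n hy0X
    have hcomm : (z*y₀) * x = x * (z*y₀) := by
      have hc1 : (z*y₀)*x*(z*y₀)⁻¹ = z*(y₀*x*y₀⁻¹)*z⁻¹ := by group
      rw [h0.1] at hc1
      have hc2 : z*x⁻¹*z⁻¹ = (z*x*z⁻¹)⁻¹ := by group
      rw [hc2, h1.1, inv_inv] at hc1
      calc (z*y₀)*x = ((z*y₀)*x*(z*y₀)⁻¹)*(z*y₀) := by group
      _ = x*(z*y₀) := by rw [hc1]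
    exact cent_eq hcf hG hk hx hmax hcomm

end Star


theorem stmt_11 {G : Type*} [Group G] [Finite G] (hG : IsPGroup 2 G)
    (hnc : ¬ IsCyclic G) (hcf : IsClawFree (reducedPowerGraph G)) :
    Monoid.exponent G ≤ 4 ∨ ∃ n : ℕ, Nonempty (G ≃* DihedralGroup n) := by
  by_cases hexp : Monoid.exponent G ≤ 4
  · exact Or.inl hexp
  right
  have : Nonempty G := ⟨1⟩
  obtain ⟨x, hmax0⟩ := Finite.exists_max (fun g : G => orderOf g)
  obtain ⟨k, hx⟩ := ord2 hG x
  have hmax : ∀ g : G, orderOf g ≤ 2^k := fun g => hx ▸ hmax0 g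
  have hk : 3 ≤ k := by
    by_contra hk3
    push_neg at hk3
    apply hexp
    have hdvd : Monoid.exponent G ∣ 2^k := by
      apply Monoid.exponent_dvd_of_forall_pow_eq_one
      intro g
      obtain ⟨j, hj⟩ := ord2 hG g
      have hjk : j ≤ k := by
        have h1 := hmax g
        rw [hj] at h1
        exact (Nat.pow_le_pow_iff_right (by norm_num)).mp h1
      have h2 : orderOf g ∣ 2^k := by rw [hj]; exact pow_dvd_pow 2 hjk
      exact orderOf_dvd_iff_pow_eq_one.mp h2
    calc Monoid.exponent G ≤ 2^k := Nat.le_of_dvd (by positivity) hdvd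
    _ ≤ 4 := by interval_cases k <;> norm_num
  -- setup
  have hXne : zpowers x ≠ ⊤ := by
    intro h
    apply hnc
    constructor
    exact ⟨x, fun g => by show g ∈ zpowers x; rw [h]; exact Subgroup.mem_top g⟩
  haveI : Fact (Nat.Prime 2) := ⟨Nat.prime_two⟩
  haveI : Group.IsNilpotent G := hG.isNilpotent
  have hNC : NormalizerCondition G := normalizerCondition_of_isNilpotent
  have hlt : zpowers x < Subgroup.normalizer (zpowers x : Set G) := hNC _ (lt_top_iff_ne_top.mpr hXne)
  obtain ⟨y₀, hy0n, hy0X⟩ := SetLike.exists_of_lt hlt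
  obtain ⟨hy0c, hy02⟩ := norm_sq hcf hG hk hx hmax hy0n hy0X
  have hy0inv : y₀⁻¹ = y₀ := inv_eq_of_mul_eq_one_right (by rw [← pow_two]; exact hy02)
  have hx4 : x^4 ≠ 1 := x4ne hk hx
  have hx2 : x^2 ≠ 1 := fun h => hx4 (by rw [show (4:ℕ) = 2*2 from rfl, pow_mul, h, one_pow])
  -- conjugation by y₀ inverts X
  have hconjinv : ∀ m : ℤ, y₀ * x^m * y₀⁻¹ = (x^m)⁻¹ := by
    intro m
    calc y₀*x^m*y₀⁻¹ = (y₀*x*y₀⁻¹)^m := by rw [conj_zpow]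
    _ = (x⁻¹)^m := by rw [hy0c]
    _ = (x^m)⁻¹ := by rw [inv_zpow]
  -- the normalizer is everything
  have hNtop : Subgroup.normalizer (zpowers x : Set G) = ⊤ := by
    by_contra hne
    have hlt2 : Subgroup.normalizer (zpowers x : Set G) < Subgroup.normalizer (Subgroup.normalizer (zpowers x : Set G) : Set G) :=
      hNC _ (lt_top_iff_ne_top.mpr hne)
    obtain ⟨g, hgn, hgN⟩ := SetLike.exists_of_lt hlt2
    have hxN : x ∈ Subgroup.normalizer (zpowers x : Set G) := le_normalizer (mem_zpowers x)
    have hhN : g*x*g⁻¹ ∈ Subgroup.normalizer (zpowers x : Set G) :=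
      (Subgroup.mem_normalizer_iff.mp hgn x).mp hxN
    rcases coset hcf hG hk hx hmax hy0n hy0X hhN with hin | hin
    · -- g x g⁻¹ ∈ X : then g normalizes X, contradiction
      have horder : x ∈ zpowers (g*x*g⁻¹) := by
        apply mem_zpowers_of_mem_of_le hin
        -- orderOf x ≤ orderOf (g x g⁻¹)
        have hdvd : orderOf x ∣ orderOf (g*x*g⁻¹) := by
          apply orderOf_dvd_iff_pow_eq_one.mpr
          have h1 : (g*x*g⁻¹)^(orderOf (g*x*g⁻¹)) = 1 := pow_orderOf_eq_one _
          rw [conj_pow] at h1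
          calc x ^ orderOf (g*x*g⁻¹)
              = g⁻¹*(g*(x ^ orderOf (g*x*g⁻¹))*g⁻¹)*g := by group
          _ = g⁻¹*1*g := by rw [h1]
          _ = 1 := by group
        exact Nat.le_of_dvd (orderOf_pos _) hdvd
      have hgnX : g ∈ Subgroup.normalizer (zpowers x : Set G) := by
        rw [Subgroup.mem_normalizer_iff]
        intro a
        constructor
        · intro ha
          obtain ⟨m, hm⟩ := mem_zpowers_iff.mp ha
          have h2 : g*a*g⁻¹ = (g*x*g⁻¹)^m := by rw [← hm, conj_zpow]
          rw [h2]; exact zpow_mem hin m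
        · intro ha
          have hXle : zpowers x ≤ zpowers (g*x*g⁻¹) := zpowers_le.mpr horder
          obtain ⟨m, hm⟩ := mem_zpowers_iff.mp (hXle ha)
          have h3 : a = x^m := by
            rw [conj_zpow] at hm
            calc a = g⁻¹*(g*a*g⁻¹)*g := by group
            _ = g⁻¹*(g*x^m*g⁻¹)*g := by rw [hm]
            _ = x^m := by group
          rw [h3]; exact zpow_mem (mem_zpowers x) m
      exact hgN hgnX
    · -- (g x g⁻¹) * y₀ ∈ X : then (g x g⁻¹)² = 1, contradiction
      obtain ⟨m, hm⟩ := mem_zpow_nat hin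
      have hback : g*x*g⁻¹ = x^m * y₀⁻¹ := by
        calc g*x*g⁻¹ = ((g*x*g⁻¹)*y₀)*y₀⁻¹ := by group
        _ = x^m*y₀⁻¹ := by rw [hm]
      have hsq : (g*x*g⁻¹)^2 = 1 := by
        have hcm : y₀⁻¹ * x^(m:ℤ) * y₀ = (x^(m:ℤ))⁻¹ := by
          rw [hy0inv]
          have := hconjinv (m:ℤ)
          rw [hy0inv] at this
          exact this
        rw [zpow_natCast] at hcm
        calc (g*x*g⁻¹)^2 = (x^m*y₀⁻¹)^2 := by rw [hback]
        _ = x^m*(y₀⁻¹*x^m*y₀)*y₀⁻¹*y₀⁻¹ := by rw [pow_two]; group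
        _ = x^m*(x^m)⁻¹*y₀⁻¹*y₀⁻¹ := by rw [hcm]
        _ = y₀⁻¹*y₀⁻¹ := by group
        _ = y₀*y₀ := by rw [hy0inv]
        _ = 1 := by rw [← pow_two]; exact hy02
      apply hx2
      rw [conj_pow] at hsq
      calc x^2 = g⁻¹*(g*x^2*g⁻¹)*g := by group
      _ = g⁻¹*1*g := by rw [hsq]
      _ = 1 := by group
  -- every element is in X or X y₀
  have hcover : ∀ z : G, z ∈ zpowers x ∨ z*y₀ ∈ zpowers x := by
    intro z
    exact coset hcf hG hk hx hmax hy0n hy0X (by rw [hNtop]; exact Subgroup.mem_top z)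
  -- build the isomorphism with DihedralGroup (2^k)
  refine ⟨2^k, ?_⟩
  haveI : NeZero (2^k) := ⟨by positivity⟩
  have hpowadd : ∀ i j : ZMod (2^k), x ^ (i+j).val = x ^ i.val * x ^ j.val := by
    intro i j
    rw [← pow_add, ZMod.val_add]
    have hpm := pow_mod_orderOf x (i.val + j.val)
    rw [hx] at hpm
    exact hpm
  have hsub : ∀ i j : ZMod (2^k), x ^ (j - i).val = (x ^ i.val)⁻¹ * x ^ j.val := by
    intro i j
    have h1 : x ^ (j-i).val * x ^ i.val = x ^ j.val := by
      calc x ^ (j-i).val * x ^ i.val = x ^ ((j-i)+i).val := (hpowadd _ _).symm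
      _ = x ^ j.val := by congr 2; exact sub_add_cancel j i
    calc x ^ (j-i).val = x ^ (j-i).val * x^i.val * (x^i.val)⁻¹ := by group
    _ = x^j.val * (x^i.val)⁻¹ := by rw [h1]
    _ = (x^i.val)⁻¹ * x^j.val := (((Commute.refl x).pow_pow j.val i.val).inv_right).eq
  have hconjN : ∀ m : ℕ, y₀ * x^m * y₀⁻¹ = (x^m)⁻¹ := by
    intro m
    have := hconjinv (m:ℤ)
    rw [zpow_natCast] at this
    exact this
  have hyx : ∀ m : ℕ, x ^ m * y₀ = y₀ * (x ^ m)⁻¹ := by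
    intro m
    have h1 : y₀*x^m*y₀ = (x^m)⁻¹ := by nth_rewrite 2 [← hy0inv]; exact hconjN m
    calc x^m*y₀ = y₀^2*(x^m*y₀) := by rw [hy02, one_mul]
    _ = y₀*(y₀*x^m*y₀) := by rw [pow_two]; group
    _ = y₀*(x^m)⁻¹ := by rw [h1]
  let f : DihedralGroup (2^k) → G := fun d =>
    DihedralGroup.casesOn d (fun i => x ^ i.val) (fun i => y₀ * x ^ i.val)
  have hmul : ∀ a b : DihedralGroup (2^k), f (a*b) = f a * f b := by
    rintro (i|i) (j|j)
    · show x ^ (i+j).val = x ^ i.val * x ^ j.val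
      exact hpowadd i j
    · show y₀ * x ^ (j-i).val = x ^ i.val * (y₀ * x ^ j.val)
      calc y₀ * x ^ (j-i).val = y₀*((x^i.val)⁻¹*x^j.val) := by rw [hsub]
      _ = (y₀*(x^i.val)⁻¹)*x^j.val := by group
      _ = (x^i.val*y₀)*x^j.val := by rw [← hyx]
      _ = x^i.val*(y₀*x^j.val) := by group
    · show y₀ * x ^ (i+j).val = (y₀ * x ^ i.val) * x ^ j.val
      rw [hpowadd]; group
    · show x ^ (j-i).val = (y₀ * x ^ i.val) * (y₀ * x ^ j.val)
      calc x ^ (j-i).val = (x^i.val)⁻¹*x^j.val := hsub i j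
      _ = y₀^2*((x^i.val)⁻¹*x^j.val) := by rw [hy02, one_mul]
      _ = y₀*(y₀*(x^i.val)⁻¹)*x^j.val := by rw [pow_two]; group
      _ = y₀*(x^i.val*y₀)*x^j.val := by rw [← hyx]
      _ = (y₀*x^i.val)*(y₀*x^j.val) := by group
  let ψ : DihedralGroup (2^k) →* G := MonoidHom.mk' f hmul
  have hinj : Function.Injective ψ := by
    rintro (i|i) (j|j) hab
    · have hab' : x ^ i.val = x ^ j.val := hab
      rw [pow_inj_mod, hx, Nat.mod_eq_of_lt (ZMod.val_lt i),
        Nat.mod_eq_of_lt (ZMod.val_lt j)] at hab'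
      exact congrArg DihedralGroup.r (ZMod.val_injective _ hab')
    · exfalso
      have hab' : x ^ i.val = y₀ * x ^ j.val := hab
      apply hy0X
      have h1 : y₀ = x^i.val*(x^j.val)⁻¹ := by
        calc y₀ = (y₀*x^j.val)*(x^j.val)⁻¹ := by group
        _ = x^i.val*(x^j.val)⁻¹ := by rw [← hab']
      rw [h1]
      exact mul_mem (pow_mem (mem_zpowers x) _) (inv_mem (pow_mem (mem_zpowers x) _))
    · exfalso
      have hab' : y₀ * x ^ i.val = x ^ j.val := hab
      apply hy0X
      have h1 : y₀ = x^j.val*(x^i.val)⁻¹ := by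
        calc y₀ = (y₀*x^i.val)*(x^i.val)⁻¹ := by group
        _ = x^j.val*(x^i.val)⁻¹ := by rw [hab']
      rw [h1]
      exact mul_mem (pow_mem (mem_zpowers x) _) (inv_mem (pow_mem (mem_zpowers x) _))
    · have hab' : y₀ * x ^ i.val = y₀ * x ^ j.val := hab
      have hab'' : x ^ i.val = x ^ j.val := mul_left_cancel hab'
      rw [pow_inj_mod, hx, Nat.mod_eq_of_lt (ZMod.val_lt i),
        Nat.mod_eq_of_lt (ZMod.val_lt j)] at hab''
      exact congrArg DihedralGroup.sr (ZMod.val_injective _ hab'')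
  have hsurj : Function.Surjective ψ := by
    intro g
    rcases hcover g with hg | hg
    · obtain ⟨m, hm⟩ := mem_zpow_nat hg
      refine ⟨DihedralGroup.r (m : ZMod (2^k)), ?_⟩
      show x ^ ((m : ZMod (2^k))).val = g
      rw [ZMod.val_natCast, ← hx, pow_mod_orderOf]
      exact hm.symm
    · obtain ⟨m, hm⟩ := mem_zpow_nat hg
      refine ⟨DihedralGroup.sr (-(m : ZMod (2^k))), ?_⟩
      show y₀ * x ^ ((-(m : ZMod (2^k))).val) = g
      have hval : x ^ ((-(m : ZMod (2^k))).val) = (x^m)⁻¹ := by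
        have hdvd : 2^k ∣ (-(m:ZMod (2^k))).val + m := by
          have h3 : (((-(m:ZMod (2^k))).val : ℕ) : ZMod (2^k)) = -(m:ZMod (2^k)) :=
            ZMod.natCast_rightInverse _
          have h2 : (((-(m:ZMod (2^k))).val + m : ℕ) : ZMod (2^k)) = 0 := by
            rw [Nat.cast_add, h3]
            simp
          exact (ZMod.natCast_eq_zero_iff _ _).mp h2
        have h1 : x ^ ((-(m : ZMod (2^k))).val) * x^m = 1 := by
          rw [← pow_add]
          exact orderOf_dvd_iff_pow_eq_one.mp (by rw [hx]; exact hdvd)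
        exact eq_inv_of_mul_eq_one_left h1
      rw [hval]
      have hg2 : g = x^m*y₀⁻¹ := by
        calc g = (g*y₀)*y₀⁻¹ := by group
        _ = x^m*y₀⁻¹ := by rw [hm]
      rw [hg2, hy0inv]
      exact (hyx m).symm
  exact ⟨(MulEquiv.ofBijective ψ ⟨hinj, hsurj⟩).symm⟩
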